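/- Let C be a category, R a precongruence on C, and Σ a family of arrows of C. The quotient functor Q_R : C → C/R and the localization functor P_Σ : C → C[Σ⁻¹] are isomorphic objects of the coslice category C ↓ Cat if and only if Σ ⊆ σR and R ⊆ ρΣ. -/

import Mathlib

open CategoryTheory

variable {C : Type*} [Category C]

/-- `Q_R` and `P_Σ` are isomorphic in the coslice `C ↓ Cat`: mutually inverse functors
commuting with the quotient and localization functors. -/
def QuotIsoLoc (R : HomRel C) (S : MorphismProperty C) : Prop :=
  ∃ (φ : Quotient R ⥤ S.Localization) (ψ : S.Localization ⥤ Quotient R),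
    Quotient.functor R ⋙ φ = S.Q ∧ S.Q ⋙ ψ = Quotient.functor R ∧
    φ ⋙ ψ = 𝟭 (Quotient R) ∧ ψ ⋙ φ = 𝟭 S.Localization

/-- `σR`: the arrows `f` admitting a homotopy inverse with respect to the least congruence
containing `R` (i.e. the kernel of the quotient functor `Q_R`). -/
def sigmaRel (R : HomRel C) : MorphismProperty C :=
  fun X Y f => ∃ g : Y ⟶ X,
    (Quotient.functor R).map (f ≫ g) = (Quotient.functor R).map (𝟙 X) ∧
    (Quotient.functor R).map (g ≫ f) = (Quotient.functor R).map (𝟙 Y)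

/-- `ρΣ`: the kernel-pair congruence of the localization functor `P_Σ`. -/
def rhoRel (S : MorphismProperty C) : HomRel C :=
  fun {_ _} f g => S.Q.map f = S.Q.map g

/-! `Q_R` is the initial functor out of `C` identifying `R`-related arrows and `P_Σ` the initial
functor inverting `Σ`. So `Q_R ≅ P_Σ` under `C` exactly when each of them has the other's defining
property, i.e. `Q_R` inverts `Σ` (which is `Σ ⊆ σR`, as `Q_R` is full) and `P_Σ` identifies
`R`-related arrows (which is `R ⊆ ρΣ`); the two induced comparison functors are then mutually
inverse by the uniqueness halves of the universal properties. -/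

lemma sigmaRel_iff_isIso_map {R : HomRel C} {X Y : C} (f : X ⟶ Y) :
    sigmaRel R f ↔ IsIso ((Quotient.functor R).map f) := by
  simp only [sigmaRel, Functor.map_comp]
  constructor
  · rintro ⟨g, hfg, hgf⟩
    exact ⟨_, hfg, hgf⟩
  · rintro ⟨g, hfg, hgf⟩
    obtain ⟨g, rfl⟩ := (Quotient.functor R).map_surjective g
    exact ⟨g, hfg, hgf⟩

lemma le_sigmaRel_iff_isInvertedBy {R : HomRel C} {S : MorphismProperty C} :
    S ≤ sigmaRel R ↔ S.IsInvertedBy (Quotient.functor R) :=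
  forall₄_congr fun _ _ f _ => sigmaRel_iff_isIso_map f

lemma rhoRel_of_quotient_functor_comp_eq {R : HomRel C} {S : MorphismProperty C}
    {φ : Quotient R ⥤ S.Localization} (hφ : Quotient.functor R ⋙ φ = S.Q)
    {X Y : C} {f g : X ⟶ Y} (hfg : R f g) : rhoRel S f g := by
  change S.Q.map f = S.Q.map g
  rw [← hφ]
  exact congrArg φ.map (CategoryTheory.Quotient.sound R hfg)

lemma quotIsoLoc_of_isInvertedBy {R : HomRel C} {S : MorphismProperty C}
    (hS : S.IsInvertedBy (Quotient.functor R))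
    (hR : ∀ ⦃X Y : C⦄ (f g : X ⟶ Y), R f g → rhoRel S f g) : QuotIsoLoc R S := by
  let φ := CategoryTheory.Quotient.lift R S.Q fun _ _ f g h => hR f g h
  let ψ := Localization.Construction.lift (Quotient.functor R) hS
  have hφ : Quotient.functor R ⋙ φ = S.Q := CategoryTheory.Quotient.lift_spec _ _ _
  have hψ : S.Q ⋙ ψ = Quotient.functor R := Localization.Construction.fac _ _
  refine ⟨φ, ψ, hφ, hψ, ?_, ?_⟩
  · apply CategoryTheory.Quotient.lift_unique' R
    rw [← Functor.assoc, hφ, hψ, Functor.comp_id]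
  · apply Localization.Construction.uniq
    rw [← Functor.assoc, hψ, hφ, Functor.comp_id]

/-- Corollary 3.6 (concreto1): `Q_R` and `P_Σ` are isomorphic in `C ↓ Cat`
iff `Σ ⊆ σR` and `R ⊆ ρΣ`. -/
theorem stmt4 (R : HomRel C) (S : MorphismProperty C) :
    QuotIsoLoc R S ↔
      ((S ≤ sigmaRel R) ∧ ∀ ⦃X Y : C⦄ (f g : X ⟶ Y), R f g → rhoRel S f g) := by
  rw [le_sigmaRel_iff_isInvertedBy]
  constructor
  · rintro ⟨φ, ψ, hφ, hψ, -, -⟩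
    exact ⟨hψ ▸ MorphismProperty.IsInvertedBy.of_comp S S.Q (Localization.inverts S.Q S) ψ,
      fun _ _ _ _ => rhoRel_of_quotient_functor_comp_eq hφ⟩
  · rintro ⟨hS, hR⟩
    exact quotIsoLoc_of_isInvertedBy hS hR
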